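/- arXiv:1908.06511 — 5 statements merged into one kernel-verified Lean document; each statement's English description precedes it below -/
import Mathlib

section
/- Let G be a finite group and let m = m(G). Then G satisfies the replacement property if and only if for every irredundant generating sequence (g₁, …, g_m) of G of length m and every sequence of maximal subgroups (M₁, …, M_m) corresponding to (g₁, …, g_m), the radical ⋂ᵢ Mᵢ is the trivial subgroup. -/
section Defs

variable {G : Type*} [Group G]

/-- `g` is a generating sequence of `G`: the set of its entries generates `G`. -/
def IsGenSeq {n : ℕ} (g : Fin n → G) : Prop :=
  Subgroup.closure (Set.range g) = ⊤

/-- `g` is irredundant: for each `i`, the entries other than `g i` do not generate `G`. -/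
def IsIrred {n : ℕ} (g : Fin n → G) : Prop :=
  ∀ i : Fin n, Subgroup.closure (g '' {j | j ≠ i}) ≠ ⊤

/-- `m(G)`: the largest length of an irredundant generating sequence of `G`. -/
noncomputable def maxIrredLen (G : Type*) [Group G] : ℕ :=
  sSup {n | ∃ g : Fin n → G, IsGenSeq g ∧ IsIrred g}

/-- `G` satisfies the replacement property. -/
def ReplacementProperty (G : Type*) [Group G] : Prop :=
  ∀ g : Fin (maxIrredLen G) → G, IsGenSeq g → IsIrred g →
    ∀ x : G, x ≠ 1 → ∃ i, IsGenSeq (Function.update g i x)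

/-- `x` is a witness to failure of the replacement property for `G`. -/
def IsWitnessToFailure {G : Type*} [Group G] (x : G) : Prop :=
  x ≠ 1 ∧ ∃ g : Fin (maxIrredLen G) → G, IsGenSeq g ∧ IsIrred g ∧
    ∀ i, ¬ IsGenSeq (Function.update g i x)

/-- A family of subgroups is in general position. -/
def InGeneralPosition {n : ℕ} (H : Fin n → Subgroup G) : Prop :=
  ∀ j, ¬ ((⨅ i ∈ ({j}ᶜ : Set (Fin n)), H i) ≤ H j)

/-- The sequence of subgroups `M` corresponds to the sequence of elements `g`. -/
def Corresponds {n : ℕ} (M : Fin n → Subgroup G) (g : Fin n → G) : Prop :=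
  (∀ i j, j ≠ i → g i ∈ M j) ∧ ∀ i, g i ∉ M i

end Defs

/-- `PSL(2,p)`. -/
abbrev PSL (p : ℕ) : Type := Matrix.ProjectiveSpecialLinearGroup (Fin 2) (ZMod p)

/-! A nontrivial `x` in the radical of maximal subgroups `M` corresponding to `g` can replace no
entry of `g`: replacing `g i` by `x` leaves everything inside `M i`. Conversely, if `x ≠ 1` can
replace no entry, each modified sequence lies in some maximal subgroup `M i`; these `M i` contain `x`,
and they correspond to `g` because `g` itself generates. -/

theorem Subgroup.closure_range_update_le_iff {G ι : Type*} [Group G] [DecidableEq ι]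
    {g : ι → G} {i : ι} {x : G} {M : Subgroup G} :
    closure (Set.range (Function.update g i x)) ≤ M ↔ x ∈ M ∧ ∀ j ≠ i, g j ∈ M := by
  rw [closure_le, Set.range_subset_iff]
  exact Function.forall_update_iff g fun _ y ↦ y ∈ M

section GeneratingSequences

variable {G : Type*} [Group G] {n : ℕ} {g : Fin n → G} {M : Subgroup G}

theorem not_isGenSeq_update_of_mem {i : Fin n} {x : G} (hM : M ≠ ⊤) (hx : x ∈ M)
    (hg : ∀ j ≠ i, g j ∈ M) : ¬ IsGenSeq (Function.update g i x) := fun hgen ↦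
  hM <| top_le_iff.mp <| hgen ▸ Subgroup.closure_range_update_le_iff.mpr ⟨hx, hg⟩

theorem IsGenSeq.apply_notMem (hgen : IsGenSeq g) (hM : M ≠ ⊤) {i : Fin n}
    (hg : ∀ j ≠ i, g j ∈ M) : g i ∉ M := fun hi ↦
  not_isGenSeq_update_of_mem hM hi hg (by rwa [Function.update_eq_self])

theorem IsGenSeq.exists_corresponds_of_forall_not_isGenSeq_update [IsCoatomic (Subgroup G)]
    (hgen : IsGenSeq g) {x : G} (hx : ∀ i, ¬ IsGenSeq (Function.update g i x)) :
    ∃ M : Fin n → Subgroup G, (∀ i, IsCoatom (M i)) ∧ Corresponds M g ∧ x ∈ ⨅ i, M i := by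
  choose M hMmax hM using fun i ↦ (eq_top_or_exists_le_coatom _).resolve_left (hx i)
  simp only [Subgroup.closure_range_update_le_iff] at hM
  exact ⟨M, hMmax,
    ⟨fun i j hji ↦ (hM j).2 i hji.symm, fun i ↦ hgen.apply_notMem (hMmax i).1 (hM i).2⟩,
    Subgroup.mem_iInf.mpr fun i ↦ (hM i).1⟩

end GeneratingSequences

theorem replacement_property_iff_radical_trivial (G : Type*) [Group G] [Finite G] :
    ReplacementProperty G ↔
      ∀ g : Fin (maxIrredLen G) → G, IsGenSeq g → IsIrred g →
        ∀ M : Fin (maxIrredLen G) → Subgroup G, (∀ i, IsCoatom (M i)) →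
          Corresponds M g → (⨅ i, M i) = ⊥ := by
  constructor
  · intro hRP g hgen hirr M hMmax ⟨hmem, _⟩
    by_contra hne
    obtain ⟨x, hx, hx1⟩ := (⨅ i, M i).bot_or_exists_ne_one.resolve_left hne
    obtain ⟨i, hi⟩ := hRP g hgen hirr x hx1
    exact not_isGenSeq_update_of_mem (hMmax i).1 (Subgroup.mem_iInf.mp hx i)
      (fun j hj ↦ hmem j i hj.symm) hi
  · intro hrad g hgen hirr x hx1
    by_contra! hno
    obtain ⟨M, hMmax, hcorr, hx⟩ := hgen.exists_corresponds_of_forall_not_isGenSeq_update hno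
    exact hx1 <| Subgroup.mem_bot.mp <| hrad g hgen hirr M hMmax hcorr ▸ hx
end

section
/- Let G be a finite group, let (g₁, …, gₙ) be an irredundant generating sequence of G, and for each i let Mᵢ be a maximal subgroup of G containing the subgroup generated by {g_j : j ≠ i}. Then g_i ∉ M_i for each i (so (M₁, …, Mₙ) corresponds to (g₁, …, gₙ)), and the sequence (M₁, …, Mₙ) is in general position. -/
theorem IsGenSeq.apply_notMem_of_ne_top {G : Type*} [Group G] {n : ℕ} {g : Fin n → G}
    (hgen : IsGenSeq g) {H : Subgroup G} (hH : H ≠ ⊤) (i : Fin n)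
    (hmem : ∀ j ≠ i, g j ∈ H) : g i ∉ H := by
  intro hi
  apply hH
  rw [eq_top_iff, ← hgen, Subgroup.closure_le]
  rintro _ ⟨j, rfl⟩
  by_cases hji : j = i
  · exact hji ▸ hi
  · exact hmem j hji

/-- `g j` lies in every `M i` with `i ≠ j` but not in `M j`. -/
theorem Corresponds.inGeneralPosition {G : Type*} [Group G] {n : ℕ} {M : Fin n → Subgroup G}
    {g : Fin n → G} (h : Corresponds M g) : InGeneralPosition M :=
  fun j hle => h.2 j (hle (Subgroup.mem_iInf.mpr fun i => Subgroup.mem_iInf.mpr (h.1 j i)))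

theorem corresponding_maximal_subgroups_general_position_general {G : Type*} [Group G]
    {n : ℕ} (g : Fin n → G) (hgen : IsGenSeq g)
    (M : Fin n → Subgroup G) (hmax : ∀ i, IsCoatom (M i))
    (hM : ∀ i, Subgroup.closure (g '' {j | j ≠ i}) ≤ M i) :
    (∀ i, g i ∉ M i) ∧ InGeneralPosition M := by
  have hmem : ∀ i j, j ≠ i → g i ∈ M j := fun i j hji =>
    hM j (Subgroup.subset_closure ⟨i, hji.symm, rfl⟩)
  have hcorr : Corresponds M g :=
    ⟨hmem, fun i => hgen.apply_notMem_of_ne_top (hmax i).1 i fun j hji => hmem j i hji.symm⟩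
  exact ⟨hcorr.2, hcorr.inGeneralPosition⟩

theorem corresponding_maximal_subgroups_general_position {G : Type*} [Group G] [Finite G]
    {n : ℕ} (g : Fin n → G) (hgen : IsGenSeq g) (hirr : IsIrred g)
    (M : Fin n → Subgroup G) (hmax : ∀ i, IsCoatom (M i))
    (hM : ∀ i, Subgroup.closure (g '' {j | j ≠ i}) ≤ M i) :
    (∀ i, g i ∉ M i) ∧ InGeneralPosition M :=
  corresponding_maximal_subgroups_general_position_general g hgen M hmax hM
end

section
/- Let G be a finite group with m = m(G), let (g₁, …, g_m) be an irredundant generating sequence of G, and let (M₁, …, M_m) be a sequence of maximal subgroups of G corresponding to (g₁, …, g_m). Then every element x ≠ 1 of the radical ⋂ᵢ Mᵢ is a witness to failure for G. -/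
namespace Corresponds

variable {G : Type*} [Group G] {n : ℕ} {M : Fin n → Subgroup G} {g : Fin n → G}

theorem closure_range_update_le (hcorr : Corresponds M g) {i : Fin n} {x : G} (hx : x ∈ M i) :
    Subgroup.closure (Set.range (Function.update g i x)) ≤ M i := by
  rw [Subgroup.closure_le]
  rintro _ ⟨j, rfl⟩
  rcases eq_or_ne j i with rfl | hji
  · simpa using hx
  · simpa [Function.update_of_ne hji] using hcorr.1 j i hji.symm

theorem not_isGenSeq_update (hcorr : Corresponds M g) {i : Fin n} (hM : M i ≠ ⊤) {x : G}
    (hx : x ∈ M i) : ¬ IsGenSeq (Function.update g i x) := fun hgen =>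
  hM (top_unique (hgen ▸ hcorr.closure_range_update_le hx))

end Corresponds

theorem radical_element_is_witness_general {G : Type*} [Group G]
    (g : Fin (maxIrredLen G) → G) (hgen : IsGenSeq g) (hirr : IsIrred g)
    (M : Fin (maxIrredLen G) → Subgroup G) (hmax : ∀ i, IsCoatom (M i))
    (hcorr : Corresponds M g)
    (x : G) (hx : x ∈ ⨅ i, M i) (hx1 : x ≠ 1) :
    IsWitnessToFailure x :=
  ⟨hx1, g, hgen, hirr, fun i =>
    hcorr.not_isGenSeq_update (hmax i).ne_top (Subgroup.mem_iInf.1 hx i)⟩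

theorem radical_element_is_witness {G : Type*} [Group G] [Finite G]
    (g : Fin (maxIrredLen G) → G) (hgen : IsGenSeq g) (hirr : IsIrred g)
    (M : Fin (maxIrredLen G) → Subgroup G) (hmax : ∀ i, IsCoatom (M i))
    (hcorr : Corresponds M g)
    (x : G) (hx : x ∈ ⨅ i, M i) (hx1 : x ≠ 1) :
    IsWitnessToFailure x :=
  radical_element_is_witness_general g hgen hirr M hmax hcorr x hx hx1
end

section
/- Let p be a prime with p > 5 and let (M₁, M₂, M₃) be a triple of maximal subgroups of PSL(2,p) in general position such that M₁ is isomorphic to the alternating group A₅ (alternatingGroup (Fin 5)). Then the intersection M₁ ⊓ M₂ ⊓ M₃ contains no element of order 5. -/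
lemma my_normal_of_index_two {H : Type*} [Group H] (K : Subgroup H) (h : K.index = 2) : K.Normal := by
  constructor
  intro n hn g
  have h1 := Subgroup.mul_mem_iff_of_index_two h (a := g * n) (b := g⁻¹)
  have h2 := Subgroup.mul_mem_iff_of_index_two h (a := g) (b := n)
  have h3 : g⁻¹ ∈ K ↔ g ∈ K := K.inv_mem_iff
  tauto

lemma my_eq_of_le_of_card {H : Type*} [Group H] [Finite H] {K K' : Subgroup H} (hle : K ≤ K')
    (hc : Nat.card K = Nat.card K') : K = K' := by
  have h1 : Nat.card (K.subgroupOf K') = Nat.card K :=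
    Nat.card_congr (Subgroup.subgroupOfEquivOfLe hle).toEquiv
  have h2 : K.subgroupOf K' = ⊤ := by
    apply Subgroup.eq_top_of_card_eq
    rw [h1, hc]
  exact le_antisymm hle (Subgroup.subgroupOf_eq_top.mp h2)

lemma my_div60 {n : ℕ} (h : n ∣ 60) (h5 : 5 ∣ n) (h60 : n ≠ 60) (h15 : n ≠ 15)
    (h20 : n ≠ 20) (h30 : n ≠ 30) : n = 5 ∨ n = 10 := by
  have hle : n ≤ 60 := Nat.le_of_dvd (by norm_num) h
  interval_cases n <;> omega

lemma my_no_sub {H : Type*} [Group H] [Finite H] (hcard : Nat.card H = 60) [IsSimpleGroup H]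
    (K : Subgroup H) (hK : Nat.card K = 15 ∨ Nat.card K = 20 ∨ Nat.card K = 30) : False := by
  classical
  have hKtop : K ≠ ⊤ := by
    intro h
    rw [h, Subgroup.card_top, hcard] at hK
    omega
  rcases K.normalCore_normal.eq_bot_or_eq_top with hbot | htop
  · have hker : (MulAction.toPermHom H (H ⧸ K)).ker = ⊥ := by
      rw [← Subgroup.normalCore_eq_ker]; exact hbot
    have hinj : Function.Injective (MulAction.toPermHom H (H ⧸ K)) :=
      (MonoidHom.ker_eq_bot_iff _).mp hker
    have hle : Nat.card H ≤ Nat.card (Equiv.Perm (H ⧸ K)) :=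
      Nat.card_le_card_of_injective _ hinj
    have hidx : Nat.card K * K.index = 60 := by rw [K.card_mul_index, hcard]
    have hq : Nat.card (H ⧸ K) = K.index := K.index_eq_card.symm
    have hperm : Nat.card (Equiv.Perm (H ⧸ K)) = (Nat.card (H ⧸ K)).factorial := by
      have : Finite (H ⧸ K) := Quotient.finite _
      have := Fintype.ofFinite (H ⧸ K)
      rw [Nat.card_eq_fintype_card, Nat.card_eq_fintype_card, Fintype.card_perm]
    rcases hK with h | h | h <;>
    · rw [h] at hidx
      have : K.index = 4 ∨ K.index = 3 ∨ K.index = 2 := by omega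
      rcases this with h' | h' | h' <;>
        rw [hperm, hq, h', hcard] at hle <;> simp [Nat.factorial] at hle
  · exact hKtop (top_le_iff.mp (htop ▸ K.normalCore_le))

lemma my_key {H : Type*} [Group H] (hcard : Nat.card H = 60) (hs : IsSimpleGroup H) {a : H} (ha : orderOf a = 5)
    {U S S' : Subgroup H} (haU : a ∈ U) (hUS : U < S) (hUS' : U < S')
    (hS : S ≠ ⊤) (hS' : S' ≠ ⊤) : S = S' := by
  have hfin : Finite H := Nat.finite_of_card_ne_zero (by omega)
  set Z := Subgroup.zpowers a with hZ
  have hcZ : Nat.card Z = 5 := by rw [hZ, Nat.card_zpowers, ha]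
  have main : ∀ T : Subgroup H, U < T → T ≠ ⊤ → T = (Subgroup.normalizer (Z : Set H)) := by
    intro T hUT hT
    have hZU : Z ≤ U := Subgroup.zpowers_le.mpr haU
    have h5u : 5 ∣ Nat.card U := hcZ ▸ Subgroup.card_dvd_of_le hZU
    have huT : Nat.card U ∣ Nat.card T := Subgroup.card_dvd_of_le hUT.le
    have hT60 : Nat.card T ∣ 60 := hcard ▸ T.card_subgroup_dvd_card
    have hTne : Nat.card T ≠ 60 := fun h =>
      hT (Subgroup.eq_top_of_card_eq _ (by rw [h, hcard]))
    have huTne : Nat.card U ≠ Nat.card T := fun h =>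
      hUT.ne (my_eq_of_le_of_card hUT.le h)
    have hT15 : Nat.card T ≠ 15 := fun h => my_no_sub hcard T (by omega)
    have hT20 : Nat.card T ≠ 20 := fun h => my_no_sub hcard T (by omega)
    have hT30 : Nat.card T ≠ 30 := fun h => my_no_sub hcard T (by omega)
    have hTcases := my_div60 hT60 (h5u.trans huT) hTne hT15 hT20 hT30
    have hcT : Nat.card T = 10 ∧ Nat.card U = 5 := by
      rcases hTcases with h | h
      · exfalso
        have : Nat.card U ≤ 5 := h ▸ Nat.le_of_dvd (by omega) (h ▸ huT)
        have : Nat.card U = 5 := Nat.dvd_antisymm (h ▸ huT) h5u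
        omega
      · refine ⟨h, ?_⟩
        have hu10 : Nat.card U ∣ 10 := h ▸ huT
        have : Nat.card U ≤ 10 := Nat.le_of_dvd (by norm_num) hu10
        interval_cases hu : Nat.card U <;> omega
    have hUZ : U = Z := (my_eq_of_le_of_card hZU (by omega)).symm
    have hZT : Z ≤ T := hUZ ▸ hUT.le
    have hcZT : Nat.card (Z.subgroupOf T) = 5 := by
      rw [Nat.card_congr (Subgroup.subgroupOfEquivOfLe hZT).toEquiv, hcZ]
    have hidx : (Z.subgroupOf T).index = 2 := by
      have := (Z.subgroupOf T).card_mul_index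
      rw [hcZT, hcT.1] at this
      omega
    have : (Z.subgroupOf T).Normal := my_normal_of_index_two _ hidx
    have hTN : T ≤ (Subgroup.normalizer (Z : Set H)) := Subgroup.le_normalizer_of_normal_subgroupOf hZT
    have hNtop : (Subgroup.normalizer (Z : Set H)) ≠ ⊤ := by
      intro h
      have hZn : Z.Normal := Subgroup.normalizer_eq_top_iff.mp h
      rcases hZn.eq_bot_or_eq_top with h' | h' <;> rw [h'] at hcZ
      · rw [Subgroup.card_bot] at hcZ; omega
      · rw [Subgroup.card_top, hcard] at hcZ; omega
    have hN60 : Nat.card (Subgroup.normalizer (Z : Set H)) ∣ 60 := hcard ▸ Subgroup.card_subgroup_dvd_card _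
    have hNne : Nat.card (Subgroup.normalizer (Z : Set H)) ≠ 60 := fun h =>
      hNtop (Subgroup.eq_top_of_card_eq _ (by rw [h, hcard]))
    have h10N : 10 ∣ Nat.card (Subgroup.normalizer (Z : Set H)) := hcT.1 ▸ Subgroup.card_dvd_of_le hTN
    have hN20 : Nat.card (Subgroup.normalizer (Z : Set H)) ≠ 20 := fun h => my_no_sub hcard (Subgroup.normalizer (Z : Set H)) (by omega)
    have hN30 : Nat.card (Subgroup.normalizer (Z : Set H)) ≠ 30 := fun h => my_no_sub hcard (Subgroup.normalizer (Z : Set H)) (by omega)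
    have hN15 : Nat.card (Subgroup.normalizer (Z : Set H)) ≠ 15 := fun h => my_no_sub hcard (Subgroup.normalizer (Z : Set H)) (by omega)
    have hcN : Nat.card (Subgroup.normalizer (Z : Set H)) = 10 := by
      rcases my_div60 hN60 (dvd_trans (by norm_num) h10N) hNne hN15 hN20 hN30 with h | h
      · omega
      · exact h
    exact my_eq_of_le_of_card hTN (by omega)
  rw [main S hUS hS, main S' hUS' hS']


lemma my_inf_compl {G : Type*} [Group G] (M : Fin 3 → Subgroup G) (j k l : Fin 3)
    (hjk : k ≠ j) (hjl : l ≠ j) (hkl : k ≠ l) :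
    (⨅ i ∈ ({j}ᶜ : Set (Fin 3)), M i) = M k ⊓ M l := by
  apply le_antisymm
  · exact le_inf (iInf₂_le k (by simpa using hjk)) (iInf₂_le l (by simpa using hjl))
  · refine le_iInf₂ fun i hi => ?_
    have hij : i ≠ j := by simpa using hi
    fin_cases i <;> fin_cases j <;> fin_cases k <;> fin_cases l <;> simp_all


theorem psl_A5_triple_no_order_five (p : ℕ) [Fact p.Prime] (hp : 5 < p)
    (M : Fin 3 → Subgroup (PSL p)) (hmax : ∀ i, IsCoatom (M i))
    (hgp : InGeneralPosition M)
    (hA5 : Nonempty (M 0 ≃* alternatingGroup (Fin 5))) :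
    ∀ x ∈ M 0 ⊓ M 1 ⊓ M 2, orderOf x ≠ 5 := by
  intro x hx hord
  obtain ⟨⟨hx0, hx1⟩, hx2⟩ : (x ∈ M 0 ∧ x ∈ M 1) ∧ x ∈ M 2 := by
    simpa [Subgroup.mem_inf] using hx
  obtain ⟨e⟩ := hA5
  -- general position in concrete form
  have hgp2 : ¬ (M 0 ⊓ M 1 ≤ M 2) := by
    have := hgp 2
    rwa [my_inf_compl M 2 0 1 (by decide) (by decide) (by decide)] at this
  have hgp1 : ¬ (M 0 ⊓ M 2 ≤ M 1) := by
    have := hgp 1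
    rwa [my_inf_compl M 1 0 2 (by decide) (by decide) (by decide)] at this
  have hgp0 : ¬ (M 1 ⊓ M 2 ≤ M 0) := by
    have := hgp 0
    rwa [my_inf_compl M 0 1 2 (by decide) (by decide) (by decide)] at this
  -- simplicity and cardinality of M 0
  haveI hnt : Nontrivial (M 0) := e.toEquiv.nontrivial
  have hsimple : IsSimpleGroup (M 0) :=
    IsSimpleGroup.isSimpleGroup_of_surjective e.symm.toMonoidHom e.symm.surjective
  have hcardA5 : Nat.card (alternatingGroup (Fin 5)) = 60 := by
    have h2 : 2 * Fintype.card (alternatingGroup (Fin 5)) =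
        Fintype.card (Equiv.Perm (Fin 5)) := two_mul_card_alternatingGroup
    rw [Fintype.card_perm, Fintype.card_fin,
      show (5 : ℕ).factorial = 120 from rfl] at h2
    rw [Nat.card_eq_fintype_card]
    omega
  have hcard : Nat.card (M 0) = 60 := by
    rw [Nat.card_congr e.toEquiv, hcardA5]
  -- set up subgroups of M 0
  set T : Subgroup (PSL p) := M 0 ⊓ M 1 ⊓ M 2 with hT
  set K2 : Subgroup (PSL p) := M 0 ⊓ M 1 with hK2
  set K3 : Subgroup (PSL p) := M 0 ⊓ M 2 with hK3
  have hTK2 : T ≤ K2 := inf_le_left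
  have hTK3 : T ≤ K3 := by
    rw [hT, hK3, inf_assoc, inf_comm (M 1) (M 2), ← inf_assoc]
    exact inf_le_left
  have hTM0 : T ≤ M 0 := hTK2.trans inf_le_left
  have hK2M0 : K2 ≤ M 0 := inf_le_left
  have hK3M0 : K3 ≤ M 0 := inf_le_left
  set U : Subgroup (M 0) := T.subgroupOf (M 0) with hU
  set S : Subgroup (M 0) := K2.subgroupOf (M 0) with hS
  set S' : Subgroup (M 0) := K3.subgroupOf (M 0) with hS'
  have hmapU : U.map (M 0).subtype = T := by
    rw [hU, Subgroup.subgroupOf_map_subtype, inf_eq_left.mpr hTM0]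
  have hmapS : S.map (M 0).subtype = K2 := by
    rw [hS, Subgroup.subgroupOf_map_subtype, inf_eq_left.mpr hK2M0]
  have hmapS' : S'.map (M 0).subtype = K3 := by
    rw [hS', Subgroup.subgroupOf_map_subtype, inf_eq_left.mpr hK3M0]
  have ha : orderOf (⟨x, hx0⟩ : M 0) = 5 := by
    rw [Subgroup.orderOf_mk]; exact hord
  have haU : (⟨x, hx0⟩ : M 0) ∈ U := by
    rw [hU, Subgroup.mem_subgroupOf]
    exact ⟨⟨hx0, hx1⟩, hx2⟩
  have hUS : U < S := by
    refine lt_of_le_of_ne (fun y hy => ?_) ?_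
    · rw [hU, Subgroup.mem_subgroupOf] at hy
      rw [hS, Subgroup.mem_subgroupOf]
      exact hTK2 hy
    · intro h
      apply hgp2
      have : T = K2 := by rw [← hmapU, ← hmapS, h]
      rw [← this]
      exact inf_le_right
  have hUS' : U < S' := by
    refine lt_of_le_of_ne (fun y hy => ?_) ?_
    · rw [hU, Subgroup.mem_subgroupOf] at hy
      rw [hS', Subgroup.mem_subgroupOf]
      exact hTK3 hy
    · intro h
      apply hgp1
      have : T = K3 := by rw [← hmapU, ← hmapS', h]
      rw [← this]
      exact hTK2.trans inf_le_right
  have hStop : S ≠ ⊤ := by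
    intro h
    rw [hS, Subgroup.subgroupOf_eq_top] at h
    have h01 : M 0 ≤ M 1 := le_trans (le_inf le_rfl (h.trans inf_le_right)) inf_le_right
    have heq : M 0 = M 1 := by
      rcases eq_or_lt_of_le h01 with h' | h'
      · exact h'
      · exact absurd ((hmax 0).2 _ h') (hmax 1).1
    exact hgp0 (heq ▸ inf_le_left)
  have hS'top : S' ≠ ⊤ := by
    intro h
    rw [hS', Subgroup.subgroupOf_eq_top] at h
    have h02 : M 0 ≤ M 2 := le_trans (le_inf le_rfl (h.trans inf_le_right)) inf_le_right
    have heq : M 0 = M 2 := by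
      rcases eq_or_lt_of_le h02 with h' | h'
      · exact h'
      · exact absurd ((hmax 0).2 _ h') (hmax 2).1
    exact hgp0 (heq ▸ inf_le_right)
  have hSS' : S = S' := my_key hcard hsimple ha haU hUS hUS' hStop hS'top
  apply hgp2
  have : K2 = K3 := by rw [← hmapS, ← hmapS', hSS']
  rw [this, hK3]
  exact inf_le_right
end

section
/- Let p be a prime with p > 5 and let (M₁, M₂, M₃) be a triple of maximal subgroups of PSL(2,p) in general position such that M₁ is isomorphic to the symmetric group S₄ (Equiv.Perm (Fin 4)). Then the intersection M₁ ⊓ M₂ ⊓ M₃ contains no element of order 4. -/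
/-!
In `S₄` the subgroups containing an element `x` of order 4 form the chain
`⟨x⟩ < N(⟨x⟩) ≅ D₈ < S₄`: such a subgroup has order 4, 8 or 24 (one of order 12 has index 2,
hence is `A₄`, which has no element of order 4), and one of order 8 contains `⟨x⟩` with index 2,
so it normalises `⟨x⟩`, while `⟨x⟩` is not normal in `S₄`. Transported along `M₁ ≅ S₄`, an
element of order 4 in `M₁ ⊓ M₂ ⊓ M₃` would make `M₁ ⊓ M₂` and `M₁ ⊓ M₃` comparable, contradicting
general position.
-/

open Equiv Subgroup

theorem pow_eq_one_of_orderOf_eq {M : Type*} [Monoid M] {x : M} {n : ℕ} (h : orderOf x = n) :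
    x ^ n = 1 :=
  h ▸ pow_orderOf_eq_one x

section SubgroupChain

variable {G G' : Type*} [Group G] [Group G']

theorem Subgroup.subgroupOf_le_subgroupOf_iff {H₁ H₂ K : Subgroup G} :
    H₁.subgroupOf K ≤ H₂.subgroupOf K ↔ K ⊓ H₁ ≤ H₂ := by
  rw [← map_le_map_iff_of_injective K.subtype_injective, subgroupOf_map_subtype,
    subgroupOf_map_subtype, le_inf_iff, inf_comm]
  exact and_iff_left inf_le_left

theorem IsChain.of_mulEquiv (e : G ≃* G') {g : G}
    (h : IsChain (· ≤ ·) {H : Subgroup G' | e g ∈ H}) :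
    IsChain (· ≤ ·) {H : Subgroup G | g ∈ H} := by
  intro H hH K hK _
  have hmem : ∀ L : Subgroup G, g ∈ L → L.map e.toMonoidHom ∈ {H : Subgroup G' | e g ∈ H} :=
    fun L hL => mem_map_of_mem e.toMonoidHom hL
  simpa only [map_le_map_iff_of_injective (f := e.toMonoidHom) e.injective] using
    h.total (hmem H hH) (hmem K hK)

theorem inGeneralPosition_fin_three_iff {M : Fin 3 → Subgroup G} :
    InGeneralPosition M ↔ ¬ M 1 ⊓ M 2 ≤ M 0 ∧ ¬ M 0 ⊓ M 2 ≤ M 1 ∧ ¬ M 0 ⊓ M 1 ≤ M 2 := by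
  have h₀ : ({0}ᶜ : Set (Fin 3)) = {1, 2} := by ext i; fin_cases i <;> simp
  have h₁ : ({1}ᶜ : Set (Fin 3)) = {0, 2} := by ext i; fin_cases i <;> simp
  have h₂ : ({2}ᶜ : Set (Fin 3)) = {0, 1} := by ext i; fin_cases i <;> simp
  simp only [InGeneralPosition, Fin.forall_fin_succ, IsEmpty.forall_iff, and_true,
    Fin.succ_zero_eq_one, Fin.succ_one_eq_two, h₀, h₁, h₂, iInf_pair]

theorem InGeneralPosition.not_isChain_subgroupOf {M : Fin 3 → Subgroup G}
    (hM : InGeneralPosition M) {x : M 0} (hx₁ : (x : G) ∈ M 1) (hx₂ : (x : G) ∈ M 2) :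
    ¬ IsChain (· ≤ ·) {H : Subgroup (M 0) | x ∈ H} := by
  intro h
  obtain ⟨-, h₂, h₁⟩ := inGeneralPosition_fin_three_iff.mp hM
  rcases h.total (x := (M 1).subgroupOf (M 0)) (y := (M 2).subgroupOf (M 0))
    (mem_subgroupOf.mpr hx₁) (mem_subgroupOf.mpr hx₂) with h12 | h21
  · exact h₁ (subgroupOf_le_subgroupOf_iff.mp h12)
  · exact h₂ (subgroupOf_le_subgroupOf_iff.mp h21)

end SubgroupChain

section PermFinFour

variable {x : Perm (Fin 4)}

theorem card_perm_fin_four : Nat.card (Perm (Fin 4)) = 24 := by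
  rw [Nat.card_perm, Nat.card_fin]; rfl

set_option maxRecDepth 4000 in
theorem notMem_alternatingGroup_of_orderOf_eq_four (hx : orderOf x = 4) :
    x ∉ alternatingGroup (Fin 4) := by
  have hsq : ∀ g : Perm (Fin 4), Perm.sign g = 1 → g ^ 4 = 1 → g ^ 2 = 1 := by decide
  exact fun hA => pow_ne_one_of_lt_orderOf two_ne_zero (by omega)
    (hsq x hA (pow_eq_one_of_orderOf_eq hx))

set_option maxRecDepth 4000 in
theorem normalizer_zpowers_ne_top_of_orderOf_eq_four (hx : orderOf x = 4) :
    normalizer (zpowers x : Set (Perm (Fin 4))) ≠ ⊤ := by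
  have hconj_ne : ∀ y : Perm (Fin 4), y ^ 4 = 1 → y ^ 2 ≠ 1 →
      ∃ g, ∀ k ∈ Finset.range 4, y ^ k ≠ g * y * g⁻¹ := by decide
  intro htop
  obtain ⟨g, hg⟩ := hconj_ne x (pow_eq_one_of_orderOf_eq hx)
    (pow_ne_one_of_lt_orderOf two_ne_zero (by omega))
  have hconj := (normalizer_eq_top_iff.mp htop).conj_mem x (mem_zpowers x) g
  rw [mem_zpowers_iff_mem_range_orderOf, hx, Finset.mem_image] at hconj
  obtain ⟨k, hk, hgk⟩ := hconj
  exact hg k hk hgk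

variable {H : Subgroup (Perm (Fin 4))}

theorem card_eq_four_or_eight_or_twentyFour_of_orderOf_eq_four (hx : orderOf x = 4)
    (hxH : x ∈ H) : Nat.card H = 4 ∨ Nat.card H = 8 ∨ Nat.card H = 24 := by
  have h4 := Subgroup.orderOf_dvd_natCard H hxH
  rw [hx] at h4
  have h24 : Nat.card H ∣ 24 := card_perm_fin_four ▸ card_subgroup_dvd_card H
  have h12 : Nat.card H ≠ 12 := fun h12 => by
    have hindex : H.index = 2 := by
      have := card_mul_index H
      rw [h12, card_perm_fin_four] at this
      omega
    exact notMem_alternatingGroup_of_orderOf_eq_four hx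
      (Perm.eq_alternatingGroup_of_index_eq_two hindex ▸ hxH)
  have := Nat.le_of_dvd (by norm_num) h24
  interval_cases h : Nat.card H <;> omega

theorem eq_zpowers_or_normalizer_or_top_of_orderOf_eq_four (hx : orderOf x = 4)
    (hxH : x ∈ H) :
    H = zpowers x ∨ H = normalizer (zpowers x : Set (Perm (Fin 4))) ∨ H = ⊤ := by
  have hle : zpowers x ≤ H := zpowers_le.mpr hxH
  rcases card_eq_four_or_eight_or_twentyFour_of_orderOf_eq_four hx hxH with h4 | h8 | h24
  · exact Or.inl (eq_of_le_of_card_ge hle (by rw [h4, Nat.card_zpowers, hx])).symm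
  · refine Or.inr (Or.inl ?_)
    have hindex : ((zpowers x).subgroupOf H).index = 2 := by
      have := card_mul_index ((zpowers x).subgroupOf H)
      rw [Nat.card_congr (subgroupOfEquivOfLe hle).toEquiv, Nat.card_zpowers, hx, h8] at this
      omega
    have hHN : H ≤ normalizer (zpowers x : Set (Perm (Fin 4))) :=
      le_normalizer_of_normal_subgroupOf (hK := normal_of_index_eq_two hindex) hle
    have hN8 : Nat.card (normalizer (zpowers x : Set (Perm (Fin 4)))) = 8 := by
      have hNtop := normalizer_zpowers_ne_top_of_orderOf_eq_four hx
      have hcard := card_le_of_le hHN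
      rcases card_eq_four_or_eight_or_twentyFour_of_orderOf_eq_four hx (hHN hxH) with h | h | h
      · omega
      · exact h
      · exact absurd (eq_top_of_card_eq _ (h.trans card_perm_fin_four.symm)) hNtop
    exact eq_of_le_of_card_ge hHN (by rw [h8, hN8])
  · exact Or.inr (Or.inr (eq_top_of_card_eq H (h24.trans card_perm_fin_four.symm)))

theorem isChain_subgroups_mem_of_orderOf_eq_four (hx : orderOf x = 4) :
    IsChain (· ≤ ·) {H : Subgroup (Perm (Fin 4)) | x ∈ H} := by
  intro H hH K hK _
  rcases eq_zpowers_or_normalizer_or_top_of_orderOf_eq_four hx hH with rfl | rfl | rfl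
  · exact Or.inl (zpowers_le.mpr hK)
  · rcases eq_zpowers_or_normalizer_or_top_of_orderOf_eq_four hx hK with rfl | rfl | rfl
    · exact Or.inr le_normalizer
    · exact Or.inl le_rfl
    · exact Or.inl le_top
  · exact Or.inr le_top

end PermFinFour

theorem psl_S4_triple_no_order_four_general (p : ℕ)
    (M : Fin 3 → Subgroup (PSL p))
    (hgp : InGeneralPosition M)
    (hS4 : Nonempty (M 0 ≃* Equiv.Perm (Fin 4))) :
    ∀ x ∈ M 0 ⊓ M 1 ⊓ M 2, orderOf x ≠ 4 := by
  rintro x ⟨⟨hx₀, hx₁⟩, hx₂⟩ hx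
  obtain ⟨e⟩ := hS4
  have he : orderOf (e ⟨x, hx₀⟩) = 4 := by rw [MulEquiv.orderOf_eq, Subgroup.orderOf_mk, hx]
  exact hgp.not_isChain_subgroupOf hx₁ hx₂
    ((isChain_subgroups_mem_of_orderOf_eq_four he).of_mulEquiv e)

theorem psl_S4_triple_no_order_four (p : ℕ) [Fact p.Prime] (hp : 5 < p)
    (M : Fin 3 → Subgroup (PSL p)) (hmax : ∀ i, IsCoatom (M i))
    (hgp : InGeneralPosition M)
    (hS4 : Nonempty (M 0 ≃* Equiv.Perm (Fin 4))) :
    ∀ x ∈ M 0 ⊓ M 1 ⊓ M 2, orderOf x ≠ 4 :=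
  psl_S4_triple_no_order_four_general p M hgp hS4
end
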